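/- arXiv:1105.2971 — 2 statements merged into one kernel-verified Lean document; each statement's English description precedes it below -/
import Mathlib

section
/- Let 𝔭 be the standard parahoric subalgebra {f ∈ L[z]^{σ̃} : f(0) ∈ 𝔭₀} of a twisted loop algebra, where σ has order k. If P(z) and Q(z) are coprime polynomials in ℂ[z], then there is a Lie algebra isomorphism 𝔭 / P(z^k)Q(z^k)𝔭 ≅ (𝔭 / P(z^k)𝔭) ⊕ (𝔭 / Q(z^k)𝔭). -/
/-!
STATEMENT 5: Let `𝔭 = {f ∈ L[z]^{σ̃} : f(0) ∈ 𝔭₀}` be a standard parahoric subalgebra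
of a twisted loop algebra (σ a diagram automorphism of order `k`, `q` a primitive
`k`-th root of unity).  If `P(z)` and `Q(z)` are coprime polynomials then
`𝔭 / P(z^k)Q(z^k)𝔭 ≅ (𝔭 / P(z^k)𝔭) ⊕ (𝔭 / Q(z^k)𝔭)` as Lie algebras.

We model `L[z]` as `ℂ[z] ⊗[ℂ] L`, with `σ̃ = σ ∘ (z ↦ q⁻¹ z)`.
-/

set_option synthInstance.maxHeartbeats 1000000
set_option maxHeartbeats 1000000

noncomputable section

open TensorProduct Polynomial

variable {L : Type} [LieRing L] [LieAlgebra ℂ L]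

instance : LieAlgebra ℂ (Polynomial ℂ ⊗[ℂ] L) where
  lie_smul c x y := by
    rw [← algebraMap_smul (Polynomial ℂ) c y,
      lie_smul (R := Polynomial ℂ) ((algebraMap ℂ (Polynomial ℂ)) c) x y,
      algebraMap_smul]

instance prodLieRing {A B : Type} [LieRing A] [LieRing B] : LieRing (A × B) where
  bracket x y := (⁅x.1, y.1⁆, ⁅x.2, y.2⁆)
  add_lie x y z := by
    ext
    · show ⁅x.1 + y.1, z.1⁆ = ⁅x.1, z.1⁆ + ⁅y.1, z.1⁆; exact add_lie _ _ _
    · show ⁅x.2 + y.2, z.2⁆ = ⁅x.2, z.2⁆ + ⁅y.2, z.2⁆; exact add_lie _ _ _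
  lie_add x y z := by
    ext
    · show ⁅x.1, y.1 + z.1⁆ = ⁅x.1, y.1⁆ + ⁅x.1, z.1⁆; exact lie_add _ _ _
    · show ⁅x.2, y.2 + z.2⁆ = ⁅x.2, y.2⁆ + ⁅x.2, z.2⁆; exact lie_add _ _ _
  lie_self x := by
    ext
    · show ⁅x.1, x.1⁆ = 0; exact lie_self _
    · show ⁅x.2, x.2⁆ = 0; exact lie_self _
  leibniz_lie x y z := by
    ext
    · show ⁅x.1, ⁅y.1, z.1⁆⁆ = ⁅⁅x.1, y.1⁆, z.1⁆ + ⁅y.1, ⁅x.1, z.1⁆⁆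
      exact leibniz_lie _ _ _
    · show ⁅x.2, ⁅y.2, z.2⁆⁆ = ⁅⁅x.2, y.2⁆, z.2⁆ + ⁅y.2, ⁅x.2, z.2⁆⁆
      exact leibniz_lie _ _ _

instance prodLieAlgebra {A B : Type} [LieRing A] [LieRing B]
    [LieAlgebra ℂ A] [LieAlgebra ℂ B] : LieAlgebra ℂ (A × B) where
  lie_smul c x y := by
    ext
    · show ⁅x.1, c • y.1⁆ = c • ⁅x.1, y.1⁆; exact lie_smul _ _ _
    · show ⁅x.2, c • y.2⁆ = c • ⁅x.2, y.2⁆; exact lie_smul _ _ _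

/-- Evaluation at `z = 0`, `L[z] → L`. -/
def ev0 (L : Type) [LieRing L] [LieAlgebra ℂ L] : Polynomial ℂ ⊗[ℂ] L →ₗ[ℂ] L :=
  (TensorProduct.lid ℂ L).toLinearMap ∘ₗ
    TensorProduct.map (Polynomial.aeval (0 : ℂ)).toLinearMap LinearMap.id

/-- The twist `σ̃ : f(z) ↦ σ(f(q⁻¹ z))` on `L[z]`. -/
def twistMap (σ : L ≃ₗ⁅ℂ⁆ L) (q : ℂ) :
    Polynomial ℂ ⊗[ℂ] L →ₗ[ℂ] Polynomial ℂ ⊗[ℂ] L :=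
  TensorProduct.map (Polynomial.aeval (Polynomial.C q⁻¹ * Polynomial.X)).toLinearMap
    (σ : L →ₗ[ℂ] L)

/-- `L` is reductive: its radical equals its centre. -/
def IsReductiveLie (L : Type) [LieRing L] [LieAlgebra ℂ L] : Prop :=
  ∀ x : L, x ∈ LieAlgebra.radical ℂ L ↔ x ∈ LieAlgebra.center ℂ L

/-- `σ` is a diagram automorphism: it permutes the Chevalley generators of a pinning. -/
def IsDiagramAut (σ : L ≃ₗ⁅ℂ⁆ L) : Prop :=
  ∃ (ι : Type) (_ : Fintype ι) (e f h : ι → L) (π : Equiv.Perm ι),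
    (∀ i, ⁅h i, e i⁆ = (2 : ℂ) • e i) ∧
    (∀ i, ⁅h i, f i⁆ = (-2 : ℂ) • f i) ∧
    (∀ i, ⁅e i, f i⁆ = h i) ∧
    (∀ i j, i ≠ j → ⁅e i, f j⁆ = 0) ∧
    LieSubalgebra.lieSpan ℂ L (Set.range e ∪ Set.range f) = ⊤ ∧
    (∀ i, σ (e i) = e (π i)) ∧ (∀ i, σ (f i) = f (π i))

/-- `𝔭₀` is a parabolic subalgebra of `L₀`: it lies in `L₀` and contains a maximal
solvable (Borel) subalgebra of `L₀`. -/
def IsParabolicOf (L₀ 𝔭₀ : LieSubalgebra ℂ L) : Prop :=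
  𝔭₀ ≤ L₀ ∧ ∃ 𝔟 : LieSubalgebra ℂ L, 𝔟 ≤ 𝔭₀ ∧ LieAlgebra.IsSolvable ↥𝔟 ∧
    ∀ 𝔟' : LieSubalgebra ℂ L, 𝔟' ≤ L₀ → LieAlgebra.IsSolvable ↥𝔟' → 𝔟 ≤ 𝔟' → 𝔟' = 𝔟

theorem twistMap_poly_smul (σ : L ≃ₗ⁅ℂ⁆ L) (q : ℂ) (p : Polynomial ℂ)
    (x : Polynomial ℂ ⊗[ℂ] L) :
    twistMap σ q (p • x) =
      (p.comp (Polynomial.C q⁻¹ * Polynomial.X)) • twistMap σ q x := by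
  induction x using TensorProduct.induction_on with
  | zero => simp
  | tmul a m =>
    rw [smul_tmul', smul_eq_mul]
    simp only [twistMap, TensorProduct.map_tmul, AlgHom.toLinearMap_apply, map_mul,
      smul_tmul', smul_eq_mul, ← Polynomial.comp_eq_aeval]
  | add u v hu hv =>
    rw [smul_add, map_add, hu, hv, map_add, smul_add]

theorem ev0_poly_smul (p : Polynomial ℂ) (x : Polynomial ℂ ⊗[ℂ] L) :
    ev0 L (p • x) = p.eval 0 • ev0 L x := by
  induction x using TensorProduct.induction_on with
  | zero => simp
  | tmul a m =>
    rw [smul_tmul', smul_eq_mul]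
    simp only [ev0, LinearMap.coe_comp, Function.comp_apply, TensorProduct.map_tmul,
      AlgHom.toLinearMap_apply, LinearMap.id_coe, id_eq, map_mul,
      LinearEquiv.coe_coe, TensorProduct.lid_tmul, Polynomial.coe_aeval_eq_eval,
      smul_smul, Polynomial.eval_mul]
  | add u v hu hv =>
    rw [smul_add, map_add, hu, hv, map_add, smul_add]

theorem comp_Xpow_comp_twist (k : ℕ) (hk : 0 < k) (q : ℂ) (hq : IsPrimitiveRoot q k)
    (R : Polynomial ℂ) :
    (R.comp (Polynomial.X ^ k)).comp (Polynomial.C q⁻¹ * Polynomial.X)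
      = R.comp (Polynomial.X ^ k) := by
  rw [Polynomial.comp_assoc]
  congr 1
  rw [Polynomial.pow_comp, Polynomial.X_comp, mul_pow, ← Polynomial.C_pow,
    inv_pow, hq.pow_eq_one, inv_one, Polynomial.C_1, one_mul]

theorem parahoric_quotient_coprime_split
    [FiniteDimensional ℂ L] (hred : IsReductiveLie L)
    (k : ℕ) (hk : 0 < k) (q : ℂ) (hq : IsPrimitiveRoot q k)
    (σ : L ≃ₗ⁅ℂ⁆ L) (hσord : σ.toLinearEquiv ^ k = 1) (hσ : IsDiagramAut σ)
    (L₀ : LieSubalgebra ℂ L) (hL₀ : ∀ x : L, x ∈ L₀ ↔ σ x = x)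
    (𝔭₀ : LieSubalgebra ℂ L) (h𝔭₀ : IsParabolicOf L₀ 𝔭₀)
    -- the standard parahoric `𝔭 = {f ∈ L[z]^{σ̃} : f(0) ∈ 𝔭₀}`:
    (𝔭 : LieSubalgebra ℂ (Polynomial ℂ ⊗[ℂ] L))
    (h𝔭 : ∀ x : Polynomial ℂ ⊗[ℂ] L,
      x ∈ 𝔭 ↔ (twistMap σ q x = x ∧ ev0 L x ∈ 𝔭₀))
    (P Q : Polynomial ℂ) (hPQ : IsCoprime P Q)
    -- the ideals `P(z^k)𝔭`, `Q(z^k)𝔭` and `P(z^k)Q(z^k)𝔭` of `𝔭`: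
    (IP IQ IPQ : LieIdeal ℂ ↥𝔭)
    (hIP : ∀ x : ↥𝔭, x ∈ IP ↔ ∃ y : Polynomial ℂ ⊗[ℂ] L, y ∈ 𝔭 ∧
      (x : Polynomial ℂ ⊗[ℂ] L) = (P.comp (Polynomial.X ^ k)) • y)
    (hIQ : ∀ x : ↥𝔭, x ∈ IQ ↔ ∃ y : Polynomial ℂ ⊗[ℂ] L, y ∈ 𝔭 ∧
      (x : Polynomial ℂ ⊗[ℂ] L) = (Q.comp (Polynomial.X ^ k)) • y)
    (hIPQ : ∀ x : ↥𝔭, x ∈ IPQ ↔ ∃ y : Polynomial ℂ ⊗[ℂ] L, y ∈ 𝔭 ∧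
      (x : Polynomial ℂ ⊗[ℂ] L) = ((P * Q).comp (Polynomial.X ^ k)) • y) :
    Nonempty ((↥𝔭 ⧸ IPQ) ≃ₗ⁅ℂ⁆ ((↥𝔭 ⧸ IP) × (↥𝔭 ⧸ IQ))) := by
  classical
  -- stability of 𝔭 under multiplication by polynomials in z^k
  have hstab : ∀ (R : Polynomial ℂ) (x : Polynomial ℂ ⊗[ℂ] L), x ∈ 𝔭 →
      (R.comp (Polynomial.X ^ k)) • x ∈ 𝔭 := by
    intro R x hx
    rw [h𝔭] at hx ⊢
    constructor
    · rw [twistMap_poly_smul, comp_Xpow_comp_twist k hk q hq, hx.1]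
    · rw [ev0_poly_smul]
      exact 𝔭₀.smul_mem _ hx.2
  obtain ⟨a, b, hab⟩ := hPQ
  set P' := P.comp (Polynomial.X ^ k) with hP'
  set Q' := Q.comp (Polynomial.X ^ k) with hQ'
  set a' := a.comp (Polynomial.X ^ k) with ha'
  set b' := b.comp (Polynomial.X ^ k) with hb'
  have hab' : a' * P' + b' * Q' = 1 := by
    rw [ha', hb', hP', hQ', ← Polynomial.mul_comp, ← Polynomial.mul_comp,
      ← Polynomial.add_comp, hab, Polynomial.one_comp]
  -- the product map
  let f : ↥𝔭 →ₗ⁅ℂ⁆ ((↥𝔭 ⧸ IP) × (↥𝔭 ⧸ IQ)) :=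
    { toFun := fun x => (LieSubmodule.Quotient.mk' IP x, LieSubmodule.Quotient.mk' IQ x)
      map_add' := fun x y => by simp [Prod.ext_iff]
      map_smul' := fun c x => by simp [Prod.ext_iff, Prod.smul_def]
      map_lie' := fun {x y} => rfl }
  have hf : ∀ x : ↥𝔭, f x = (LieSubmodule.Quotient.mk' IP x, LieSubmodule.Quotient.mk' IQ x) :=
    fun _ => rfl
  -- kernel computation
  have hker : f.ker = IPQ := by
    ext x
    rw [LieHom.mem_ker, hf, Prod.ext_iff, hIPQ]
    have h1 : (LieSubmodule.Quotient.mk' IP x = 0) ↔ x ∈ IP :=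
      LieSubmodule.Quotient.mk_eq_zero IP
    have h2 : (LieSubmodule.Quotient.mk' IQ x = 0) ↔ x ∈ IQ :=
      LieSubmodule.Quotient.mk_eq_zero IQ
    show (_ ∧ _) ↔ _
    simp only [Prod.fst_zero, Prod.snd_zero]
    rw [h1, h2, hIP, hIQ]
    constructor
    · rintro ⟨⟨y, hy, hxy⟩, ⟨y', hy', hxy'⟩⟩
      refine ⟨a' • y' + b' • y, ?_, ?_⟩
      · exact 𝔭.add_mem (hstab a y' hy') (hstab b y hy)
      · rw [Polynomial.mul_comp]
        calc (x : Polynomial ℂ ⊗[ℂ] L)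
            = (a' * P' + b' * Q') • (x : Polynomial ℂ ⊗[ℂ] L) := by rw [hab', one_smul]
          _ = (a' * P') • (x : Polynomial ℂ ⊗[ℂ] L)
              + (b' * Q') • (x : Polynomial ℂ ⊗[ℂ] L) := add_smul _ _ _
          _ = (a' * P') • (Q' • y') + (b' * Q') • (P' • y) := by
              congr 1
              · rw [hxy']
              · rw [hxy]
          _ = (P' * Q') • (a' • y' + b' • y) := by module
    · rintro ⟨y, hy, hxy⟩
      rw [Polynomial.mul_comp] at hxy
      constructor
      · exact ⟨Q' • y, hstab Q y hy, by rw [hxy, mul_smul]⟩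
      · exact ⟨P' • y, hstab P y hy, by rw [hxy, mul_comm, mul_smul]⟩
  -- surjectivity
  have hsurj : Function.Surjective f := by
    rintro ⟨u, v⟩
    obtain ⟨x, rfl⟩ := LieSubmodule.Quotient.surjective_mk' IP u
    obtain ⟨y, rfl⟩ := LieSubmodule.Quotient.surjective_mk' IQ v
    refine ⟨⟨(b' * Q') • (x : Polynomial ℂ ⊗[ℂ] L) + (a' * P') • (y : Polynomial ℂ ⊗[ℂ] L),
      ?_⟩, ?_⟩
    · refine 𝔭.add_mem ?_ ?_
      · have := hstab (b * Q) x x.2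
        rwa [Polynomial.mul_comp] at this
      · have := hstab (a * P) y y.2
        rwa [Polynomial.mul_comp] at this
    · rw [hf, Prod.ext_iff]
      constructor
      · rw [show ∀ u v : ↥𝔭, (LieSubmodule.Quotient.mk' IP u = LieSubmodule.Quotient.mk' IP v)
            ↔ u - v ∈ IP from fun u v => Submodule.Quotient.eq IP.toSubmodule, hIP]
        refine ⟨a' • ((y : Polynomial ℂ ⊗[ℂ] L) - (x : Polynomial ℂ ⊗[ℂ] L)),
          hstab a _ (𝔭.sub_mem y.2 x.2), ?_⟩
        show (b' * Q') • (x : Polynomial ℂ ⊗[ℂ] L) + (a' * P') • (y : Polynomial ℂ ⊗[ℂ] L)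
            - (x : Polynomial ℂ ⊗[ℂ] L)
          = P' • (a' • ((y : Polynomial ℂ ⊗[ℂ] L) - (x : Polynomial ℂ ⊗[ℂ] L)))
        match_scalars
        · linear_combination hab'
        · ring
      · rw [show ∀ u v : ↥𝔭, (LieSubmodule.Quotient.mk' IQ u = LieSubmodule.Quotient.mk' IQ v)
            ↔ u - v ∈ IQ from fun u v => Submodule.Quotient.eq IQ.toSubmodule, hIQ]
        refine ⟨b' • ((x : Polynomial ℂ ⊗[ℂ] L) - (y : Polynomial ℂ ⊗[ℂ] L)),
          hstab b _ (𝔭.sub_mem x.2 y.2), ?_⟩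
        show (b' * Q') • (x : Polynomial ℂ ⊗[ℂ] L) + (a' * P') • (y : Polynomial ℂ ⊗[ℂ] L)
            - (y : Polynomial ℂ ⊗[ℂ] L)
          = Q' • (b' • ((x : Polynomial ℂ ⊗[ℂ] L) - (y : Polynomial ℂ ⊗[ℂ] L)))
        match_scalars
        · ring
        · linear_combination hab'
  -- assemble the isomorphism
  have hrange : (f.range : Set ((↥𝔭 ⧸ IP) × (↥𝔭 ⧸ IQ)))
      = ((⊤ : LieSubalgebra ℂ ((↥𝔭 ⧸ IP) × (↥𝔭 ⧸ IQ))) : Set ((↥𝔭 ⧸ IP) × (↥𝔭 ⧸ IQ))) := by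
    ext w
    simpa [LieHom.mem_range] using hsurj w
  rw [← hker]
  exact ⟨f.quotKerEquivRange.trans ((LieEquiv.ofEq _ _ hrange).trans LieSubalgebra.topEquiv)⟩

end
end

section
/- Let 𝔭 = {f ∈ L[z]^{σ̃} : f(0) ∈ 𝔭₀} be a standard parahoric of a twisted loop algebra with σ of order k. For any nonzero scalar α ∈ ℂ, the quotient Lie algebra 𝔭 / (z^k − α)𝔭 is isomorphic to L. -/
/-!
STATEMENT 6: Let `𝔭 = {f ∈ L[z]^{σ̃} : f(0) ∈ 𝔭₀}` be a standard parahoric of a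
twisted loop algebra with `σ` a diagram automorphism of order `k`.  For any nonzero
`α ∈ ℂ`, the quotient Lie algebra `𝔭 / (z^k − α)𝔭` is isomorphic to `L`.
-/

set_option synthInstance.maxHeartbeats 1000000
set_option maxHeartbeats 1000000

noncomputable section

open TensorProduct Polynomial

variable {L : Type} [LieRing L] [LieAlgebra ℂ L]

namespace ParahoricAux

/-- Evaluation at `z = c`, `L[z] → L`. -/
def evAt (c : ℂ) : Polynomial ℂ ⊗[ℂ] L →ₗ[ℂ] L :=
  (TensorProduct.lid ℂ L).toLinearMap ∘ₗ
    TensorProduct.map (Polynomial.aeval (c : ℂ)).toLinearMap LinearMap.id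

@[simp] lemma evAt_tmul (c : ℂ) (p : Polynomial ℂ) (x : L) :
    evAt c (p ⊗ₜ[ℂ] x) = p.eval c • x := by
  simp [evAt, Polynomial.coe_aeval_eq_eval]

lemma evAt_smul (c : ℂ) (p : Polynomial ℂ) (y : Polynomial ℂ ⊗[ℂ] L) :
    evAt c (p • y) = p.eval c • evAt c y := by
  induction y using TensorProduct.induction_on with
  | zero => simp
  | tmul r x => rw [TensorProduct.smul_tmul']; simp [smul_eq_mul, mul_smul]
  | add u v hu hv => rw [smul_add, map_add, map_add, hu, hv, smul_add]

lemma evAt_lie (c : ℂ) (u v : Polynomial ℂ ⊗[ℂ] L) :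
    evAt c ⁅u, v⁆ = ⁅evAt c u, evAt c v⁆ := by
  have hzl : ∀ w : Polynomial ℂ ⊗[ℂ] L, ⁅(0 : Polynomial ℂ ⊗[ℂ] L), w⁆ = 0 :=
    fun w => zero_lie w
  have hlz : ∀ w : Polynomial ℂ ⊗[ℂ] L, ⁅w, (0 : Polynomial ℂ ⊗[ℂ] L)⁆ = 0 :=
    fun w => lie_zero w
  have hal : ∀ a b w : Polynomial ℂ ⊗[ℂ] L, ⁅a + b, w⁆ = ⁅a, w⁆ + ⁅b, w⁆ :=
    fun a b w => add_lie a b w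
  have hla : ∀ a b w : Polynomial ℂ ⊗[ℂ] L, ⁅w, a + b⁆ = ⁅w, a⁆ + ⁅w, b⁆ :=
    fun a b w => lie_add w a b
  have htt : ∀ (p r : Polynomial ℂ) (x y : L),
      ⁅p ⊗ₜ[ℂ] x, r ⊗ₜ[ℂ] y⁆ = (p * r) ⊗ₜ[ℂ] ⁅x, y⁆ :=
    fun p r x y => LieAlgebra.ExtendScalars.bracket_tmul ℂ (Polynomial ℂ) L L p r x y
  induction u using TensorProduct.induction_on with
  | zero => rw [hzl v]; simp
  | tmul p x =>
    induction v using TensorProduct.induction_on with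
    | zero => rw [hlz (p ⊗ₜ[ℂ] x)]; simp
    | tmul r y =>
      rw [htt, evAt_tmul, evAt_tmul, evAt_tmul, smul_lie, lie_smul, Polynomial.eval_mul,
        mul_smul]
    | add a b ha hb => rw [hla, map_add, ha, hb, map_add, lie_add]
  | add a b ha hb => rw [hal, map_add, ha, hb, map_add, add_lie]

/-- Evaluation at `z = c` as a morphism of Lie algebras. -/
def evLie (c : ℂ) : Polynomial ℂ ⊗[ℂ] L →ₗ⁅ℂ⁆ L :=
  { evAt (L := L) c with map_lie' := fun {u v} => evAt_lie c u v }

lemma evLie_apply (c : ℂ) (y : Polynomial ℂ ⊗[ℂ] L) : evLie c y = evAt c y := rfl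


lemma twistMap_tmul (σ : L ≃ₗ⁅ℂ⁆ L) (q : ℂ) (p : Polynomial ℂ) (x : L) :
    twistMap σ q (p ⊗ₜ[ℂ] x)
      = (Polynomial.aeval (Polynomial.C q⁻¹ * Polynomial.X) p) ⊗ₜ[ℂ] σ x := rfl

lemma twistMap_smul (σ : L ≃ₗ⁅ℂ⁆ L) (q : ℂ) (p : Polynomial ℂ)
    (y : Polynomial ℂ ⊗[ℂ] L) :
    twistMap σ q (p • y)
      = (Polynomial.aeval (Polynomial.C q⁻¹ * Polynomial.X) p) • twistMap σ q y := by
  induction y using TensorProduct.induction_on with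
  | zero => simp
  | tmul r x =>
    rw [TensorProduct.smul_tmul', twistMap_tmul, twistMap_tmul, TensorProduct.smul_tmul']
    simp [smul_eq_mul]
  | add u v hu hv => rw [smul_add, map_add, hu, hv, map_add, smul_add]

lemma evAt_twistMap (σ : L ≃ₗ⁅ℂ⁆ L) (q : ℂ) (c : ℂ) (y : Polynomial ℂ ⊗[ℂ] L) :
    evAt c (twistMap σ q y) = σ (evAt (q⁻¹ * c) y) := by
  have h0 : σ (0 : L) = 0 := σ.toLinearEquiv.map_zero
  have hsm : ∀ (a : ℂ) (x : L), σ (a • x) = a • σ x := fun a x => σ.toLinearEquiv.map_smul a x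
  have had : ∀ x y : L, σ (x + y) = σ x + σ y := fun x y => σ.toLinearEquiv.map_add x y
  induction y using TensorProduct.induction_on with
  | zero => rw [map_zero, map_zero, map_zero, h0]
  | tmul p x =>
    rw [twistMap_tmul, evAt_tmul, evAt_tmul, hsm]
    congr 1
    rw [← Polynomial.comp_eq_aeval, Polynomial.eval_comp]
    simp
  | add u v hu hv => rw [map_add, map_add, hu, hv, map_add (evAt (q⁻¹ * c)), had]

lemma repr_evAt {ι : Type*} (B : Module.Basis ι ℂ L) (c : ℂ) (f : Polynomial ℂ ⊗[ℂ] L) (b : ι) :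
    B.repr (evAt c f) b = ((B.baseChange (Polynomial ℂ)).repr f b).eval c := by
  induction f using TensorProduct.induction_on with
  | zero => simp
  | tmul p x =>
    rw [evAt_tmul, Module.Basis.baseChange_repr_tmul, map_smul]
    simp [mul_comm]
  | add u v hu hv => simp only [map_add, Finsupp.add_apply, hu, hv, Polynomial.eval_add]

lemma smul_cancel {ι : Type*} (B : Module.Basis ι ℂ L) (r : Polynomial ℂ) (hr : r ≠ 0)
    {u v : Polynomial ℂ ⊗[ℂ] L} (h : r • u = r • v) : u = v := by
  set BB := B.baseChange (Polynomial ℂ)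
  apply BB.repr.injective
  ext b : 1
  have h2 := congrArg (fun w => BB.repr w b) h
  simp only [map_smul, Finsupp.smul_apply, smul_eq_mul] at h2
  exact mul_left_cancel₀ hr h2

lemma exists_smul_of_dvd {ι : Type*} (B : Module.Basis ι ℂ L) (d : Polynomial ℂ) (hd : d.Monic)
    (f : Polynomial ℂ ⊗[ℂ] L)
    (h : ∀ b, d ∣ (B.baseChange (Polynomial ℂ)).repr f b) :
    ∃ g, f = d • g := by
  set BB := B.baseChange (Polynomial ℂ)
  refine ⟨BB.repr.symm (Finsupp.mapRange (fun p => p /ₘ d)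
    (Polynomial.zero_divByMonic d) (BB.repr f)), ?_⟩
  apply BB.repr.injective
  ext b : 1
  rw [map_smul, LinearEquiv.apply_symm_apply]
  simp only [Finsupp.smul_apply, Finsupp.mapRange_apply, smul_eq_mul]
  conv_lhs => rw [← Polynomial.modByMonic_add_div (BB.repr f b) d]
  rw [(Polynomial.modByMonic_eq_zero_iff_dvd hd).mpr (h b), zero_add]

lemma ev0_eq_evAt : ev0 L = evAt (0 : ℂ) := rfl

end ParahoricAux


open ParahoricAux

theorem parahoric_quotient_linear_factor
    [FiniteDimensional ℂ L] (hred : IsReductiveLie L)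
    (k : ℕ) (hk : 0 < k) (q : ℂ) (hq : IsPrimitiveRoot q k)
    (σ : L ≃ₗ⁅ℂ⁆ L) (hσord : σ.toLinearEquiv ^ k = 1) (hσ : IsDiagramAut σ)
    (L₀ : LieSubalgebra ℂ L) (hL₀ : ∀ x : L, x ∈ L₀ ↔ σ x = x)
    (𝔭₀ : LieSubalgebra ℂ L) (h𝔭₀ : IsParabolicOf L₀ 𝔭₀)
    (𝔭 : LieSubalgebra ℂ (Polynomial ℂ ⊗[ℂ] L))
    (h𝔭 : ∀ x : Polynomial ℂ ⊗[ℂ] L,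
      x ∈ 𝔭 ↔ (twistMap σ q x = x ∧ ev0 L x ∈ 𝔭₀))
    (α : ℂ) (hα : α ≠ 0)
    -- the ideal `(z^k − α)𝔭` of `𝔭`:
    (I : LieIdeal ℂ ↥𝔭)
    (hI : ∀ x : ↥𝔭, x ∈ I ↔ ∃ y : Polynomial ℂ ⊗[ℂ] L, y ∈ 𝔭 ∧
      (x : Polynomial ℂ ⊗[ℂ] L) = (Polynomial.X ^ k - Polynomial.C α) • y) :
    Nonempty ((↥𝔭 ⧸ I) ≃ₗ⁅ℂ⁆ L) := by
  classical
  have hkC : (k : ℂ) ≠ 0 := Nat.cast_ne_zero.mpr hk.ne'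
  obtain ⟨β, hβ⟩ := IsAlgClosed.exists_pow_nat_eq α hk
  have hβ0 : β ≠ 0 := by
    intro h; exact hα (by rw [← hβ, h, zero_pow hk.ne'])
  have hq0 : q ≠ 0 := hq.ne_zero hk.ne'
  have hqk : q ^ k = 1 := hq.pow_eq_one
  have hσiter : ∀ x : L, (⇑σ)^[k] x = x := by
    intro x
    have h1 : (σ.toLinearEquiv ^ k) x = x := by rw [hσord]; rfl
    rwa [LinearEquiv.pow_apply] at h1
  have hs0 : σ (0 : L) = 0 := σ.toLinearEquiv.map_zero
  have hssmul : ∀ (a : ℂ) (x : L), σ (a • x) = a • σ x := fun a x => σ.toLinearEquiv.map_smul a x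
  have hssum : ∀ (s : Finset ℕ) (g : ℕ → L), σ (∑ j ∈ s, g j) = ∑ j ∈ s, σ (g j) :=
    fun s g => map_sum σ.toLinearEquiv g s
  -- eigen-decomposition of an arbitrary element of `L` w.r.t. `σ`
  have key : ∀ x : L, ∃ xs : ℕ → L,
      (∑ i ∈ Finset.range k, xs i = x) ∧ ∀ i, σ (xs i) = q ^ i • xs i := by
    intro x
    refine ⟨fun i => (k : ℂ)⁻¹ • ∑ j ∈ Finset.range k, ((q⁻¹) ^ i) ^ j • (⇑σ)^[j] x, ?_, ?_⟩
    · rw [← Finset.smul_sum, Finset.sum_comm]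
      have h1 : ∀ j ∈ Finset.range k, ∑ i ∈ Finset.range k, ((q⁻¹) ^ i) ^ j • (⇑σ)^[j] x
          = (∑ i ∈ Finset.range k, ((q⁻¹) ^ j) ^ i) • (⇑σ)^[j] x := by
        intro j _
        rw [Finset.sum_smul]
        exact Finset.sum_congr rfl fun i _ => by rw [← pow_mul, ← pow_mul, mul_comm]
      rw [Finset.sum_congr rfl h1,
        Finset.sum_eq_single_of_mem 0 (Finset.mem_range.mpr hk) ?_]
      · simp only [pow_zero, one_pow, Finset.sum_const, Finset.card_range, nsmul_eq_mul,
          mul_one, Function.iterate_zero, id_eq]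
        rw [smul_smul, inv_mul_cancel₀ hkC, one_smul]
      · intro j hj hj0
        have hc1 : (q⁻¹) ^ j ≠ 1 :=
          hq.inv.pow_ne_one_of_pos_of_lt hj0 (Finset.mem_range.mp hj)
        have hck : ((q⁻¹) ^ j) ^ k = 1 := by
          rw [← pow_mul, mul_comm, pow_mul, inv_pow, hqk, inv_one, one_pow]
        have hgeom : (∑ i ∈ Finset.range k, ((q⁻¹) ^ j) ^ i) * ((q⁻¹) ^ j - 1)
            = ((q⁻¹) ^ j) ^ k - 1 := geom_sum_mul _ _
        rw [hck, sub_self] at hgeom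
        rcases mul_eq_zero.mp hgeom with h | h
        · rw [h, zero_smul]
        · exact absurd (sub_eq_zero.mp h) hc1
    · intro i
      have hc0 : ((q⁻¹ : ℂ)) ^ i ≠ 0 := pow_ne_zero _ (inv_ne_zero hq0)
      have hcinv : ((q⁻¹ : ℂ) ^ i)⁻¹ = q ^ i := by rw [inv_pow, inv_inv]
      have hck : ((q⁻¹ : ℂ) ^ i) ^ k = 1 := by
        rw [← pow_mul, mul_comm, pow_mul, inv_pow, hqk, inv_one, one_pow]
      set c : ℂ := (q⁻¹) ^ i with hc
      obtain ⟨m, hm⟩ : ∃ m, k = m + 1 := ⟨k - 1, (Nat.succ_pred_eq_of_pos hk).symm⟩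
      have hcm : c ^ m = c⁻¹ := by
        refine eq_inv_of_mul_eq_one_left ?_
        rw [← pow_succ, ← hm, hck]
      rw [hssmul, hssum]
      have hterm : ∀ j, σ (c ^ j • (⇑σ)^[j] x) = c ^ j • (⇑σ)^[j + 1] x := by
        intro j; rw [hssmul, ← Function.iterate_succ_apply' (⇑σ) j x]
      rw [Finset.sum_congr rfl fun j _ => hterm j]
      rw [smul_comm (q ^ i) ((k : ℂ)⁻¹)]
      congr 1
      rw [← hcinv, hm]
      rw [Finset.sum_range_succ, Finset.sum_range_succ', smul_add, Finset.smul_sum]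
      have hlast : c ^ m • (⇑σ)^[m + 1] x = c⁻¹ • ((c ^ 0) • (⇑σ)^[0] x) := by
        rw [← hm] at *
        rw [hσiter x, hcm]
        simp
      rw [hlast]
      congr 1
      refine Finset.sum_congr rfl fun j _ => ?_
      rw [smul_smul, pow_succ', ← mul_assoc, inv_mul_cancel₀ hc0, one_mul]
  -- preimages of eigenvectors
  have hpre : ∀ (i : ℕ) (x : L), σ x = q ^ i • x →
      ∃ fE, fE ∈ 𝔭 ∧ evAt β fE = x := by
    intro i x hx
    set m : ℕ := if i = 0 then k else i with hm
    have hm0 : m ≠ 0 := by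
      rw [hm]; split
      · exact hk.ne'
      · assumption
    have hqm : q ^ m = q ^ i := by
      rw [hm]; split
      · next h => rw [h, hqk, pow_zero]
      · rfl
    have hqi0 : q ^ i ≠ 0 := pow_ne_zero _ hq0
    refine ⟨((β ^ m)⁻¹ • (X ^ m : Polynomial ℂ)) ⊗ₜ[ℂ] x, ?_, ?_⟩
    · rw [h𝔭]
      constructor
      · rw [twistMap_tmul, hx]
        have hP : Polynomial.aeval (Polynomial.C q⁻¹ * Polynomial.X)
            ((β ^ m)⁻¹ • (X ^ m : Polynomial ℂ))
            = (q⁻¹) ^ m • ((β ^ m)⁻¹ • (X ^ m : Polynomial ℂ)) := by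
          rw [map_smul, map_pow, Polynomial.aeval_X, mul_pow, ← Polynomial.C_pow,
            smul_comm]
          congr 1
          rw [Polynomial.smul_eq_C_mul]
        rw [hP, TensorProduct.smul_tmul, smul_smul, inv_pow, ← hqm,
          inv_mul_cancel₀ (by rw [hqm]; exact hqi0), one_smul]
      · have : ev0 L (((β ^ m)⁻¹ • (X ^ m : Polynomial ℂ)) ⊗ₜ[ℂ] x)
            = (0 : ℂ) • x := by
          rw [ev0_eq_evAt, evAt_tmul]
          congr 1
          simp [zero_pow hm0]
        rw [this, zero_smul]
        exact 𝔭₀.zero_mem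
    · rw [evAt_tmul]
      have : Polynomial.eval β ((β ^ m)⁻¹ • (X ^ m : Polynomial ℂ)) = 1 := by
        simp [inv_mul_cancel₀ (pow_ne_zero m hβ0)]
      rw [this, one_smul]
  -- surjectivity of evaluation at `β` on `𝔭`
  have hsurj : ∀ x : L, ∃ fE, fE ∈ 𝔭 ∧ evAt β fE = x := by
    intro x
    obtain ⟨xs, hxs1, hxs2⟩ := key x
    have h1 : ∀ i, ∃ fE, fE ∈ 𝔭 ∧ evAt β fE = xs i := fun i => hpre i (xs i) (hxs2 i)
    choose F hF1 hF2 using h1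
    refine ⟨∑ i ∈ Finset.range k, F i, ?_, ?_⟩
    · exact Submodule.sum_mem 𝔭.toSubmodule fun i _ => hF1 i
    · rw [map_sum, Finset.sum_congr rfl fun i _ => hF2 i]
      exact hxs1
  -- the evaluation morphism on `𝔭`
  let φ : ↥𝔭 →ₗ⁅ℂ⁆ L := (evLie β).comp 𝔭.incl
  have hφ : ∀ y : ↥𝔭, φ y = evAt β (y : Polynomial ℂ ⊗[ℂ] L) := fun y => rfl
  have hmonic : (X ^ k - Polynomial.C α : Polynomial ℂ).Monic :=
    Polynomial.monic_X_pow_sub_C α hk.ne'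
  have hXk0 : (X ^ k - Polynomial.C α : Polynomial ℂ) ≠ 0 := hmonic.ne_zero
  set B := Module.Basis.ofVectorSpace ℂ L with hB
  have haev : Polynomial.aeval (Polynomial.C q⁻¹ * Polynomial.X)
      ((X : Polynomial ℂ) ^ k - Polynomial.C α)
      = (X : Polynomial ℂ) ^ k - Polynomial.C α := by
    rw [map_sub, map_pow, Polynomial.aeval_X, Polynomial.aeval_C, mul_pow, ← Polynomial.C_pow,
      inv_pow, hqk, inv_one, Polynomial.C_1, one_mul]
    rfl
  have hker : φ.ker = I := by
    ext y
    rw [LieHom.mem_ker, hI y]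
    constructor
    · intro h0
      rw [hφ] at h0
      set f := (y : Polynomial ℂ ⊗[ℂ] L) with hfdef
      have hfmem : f ∈ 𝔭 := y.2
      obtain ⟨htw, hev0⟩ := (h𝔭 f).mp hfmem
      have hroots : ∀ j : ℕ, evAt ((q⁻¹) ^ j * β) f = 0 := by
        intro j
        induction j with
        | zero => simpa using h0
        | succ n ih =>
          have h1 := evAt_twistMap σ q ((q⁻¹) ^ n * β) f
          rw [htw, ih] at h1
          have h2 : evAt (q⁻¹ * ((q⁻¹) ^ n * β)) f = 0 :=
            σ.injective (h1.symm.trans hs0.symm)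
          have h3 : (q⁻¹) ^ (n + 1) * β = q⁻¹ * ((q⁻¹) ^ n * β) := by ring
          rw [h3]; exact h2
      have hdvd : ∀ b, (X ^ k - Polynomial.C α : Polynomial ℂ)
          ∣ (B.baseChange (Polynomial ℂ)).repr f b := by
        intro b
        rw [X_pow_sub_C_eq_prod hq.inv hk hβ]
        apply Finset.prod_dvd_of_coprime
        · intro u hu v hv huv
          apply Polynomial.isCoprime_X_sub_C_of_isUnit_sub
          refine Ne.isUnit (sub_ne_zero.mpr ?_)
          intro hEq
          exact huv (hq.inv.pow_inj (Finset.mem_range.mp hu) (Finset.mem_range.mp hv)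
            (mul_right_cancel₀ hβ0 hEq))
        · intro j _
          rw [Polynomial.dvd_iff_isRoot]
          have h4 := repr_evAt B ((q⁻¹) ^ j * β) f b
          rw [hroots j] at h4
          simpa using h4.symm
      obtain ⟨g, hfg⟩ := exists_smul_of_dvd B _ hmonic f hdvd
      refine ⟨g, ?_, hfg⟩
      rw [h𝔭]
      refine ⟨?_, ?_⟩
      · apply smul_cancel B _ hXk0
        calc (X ^ k - Polynomial.C α : Polynomial ℂ) • twistMap σ q g
            = twistMap σ q ((X ^ k - Polynomial.C α : Polynomial ℂ) • g) := by
              rw [twistMap_smul, haev]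
          _ = twistMap σ q f := by rw [← hfg]
          _ = f := htw
          _ = (X ^ k - Polynomial.C α : Polynomial ℂ) • g := hfg
      · have h5 : ev0 L f = (-α) • evAt 0 g := by
          rw [ev0_eq_evAt, hfg, evAt_smul]
          congr 1
          simp [zero_pow hk.ne']
        have h6 : evAt 0 g = (-α)⁻¹ • ev0 L f := by
          rw [h5, smul_smul, inv_mul_cancel₀ (neg_ne_zero.mpr hα), one_smul]
        rw [ev0_eq_evAt, h6]
        exact 𝔭₀.smul_mem _ hev0
    · rintro ⟨g, hg, hyg⟩
      rw [hφ, hyg, evAt_smul]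
      have : Polynomial.eval β ((X : Polynomial ℂ) ^ k - Polynomial.C α) = 0 := by
        simp [hβ]
      rw [this, zero_smul]
  have hsurjφ : Function.Surjective φ := by
    intro x
    obtain ⟨fE, hfE, hev⟩ := hsurj x
    exact ⟨⟨fE, hfE⟩, hev⟩
  rw [← hker]
  have hrange : φ.range = ⊤ := (LieHom.range_eq_top φ).mpr hsurjφ
  exact ⟨φ.quotKerEquivRange.trans
    ((LieEquiv.ofEq _ _ (by rw [hrange])).trans LieSubalgebra.topEquiv)⟩

end
end
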